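/- Bound via Lemma 1: With Q = [δ_{ij}S_j] + A^T A ⊗ I_B where each S_j is B×B symmetric positive definite and A^T A is invertible, for z = vec((Y − A R)^T A): 0 ≤ z^T Q^{-1} z ≤ ‖U^T(Y − A R)‖_F² ≤ ‖Y − A R‖_F², where A = U Λ V^T is the compact SVD. -/

import Mathlib

open Matrix Kronecker

lemma tr_eq_sum_sq {n b : ℕ} (X : Matrix (Fin n) (Fin b) ℝ) :
    Matrix.trace (Xᵀ * X) = ∑ i, ∑ j, (X i j)^2 := by
  simp [Matrix.trace, Matrix.diag, Matrix.mul_apply, sq]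
  exact Finset.sum_comm

lemma dot_kron {M B : ℕ} (G : Matrix (Fin M) (Fin M) ℝ) (W : Matrix (Fin B) (Fin M) ℝ) :
    (fun p : Fin M × Fin B => W p.2 p.1) ⬝ᵥ
      ((G ⊗ₖ (1 : Matrix (Fin B) (Fin B) ℝ)) *ᵥ (fun p => W p.2 p.1))
      = Matrix.trace (W * G * Wᵀ) := by
  simp only [dotProduct, Matrix.mulVec, Matrix.trace, Matrix.diag, Matrix.mul_apply,
    Fintype.sum_prod_type, Matrix.one_apply, kroneckerMap_apply, Matrix.transpose_apply,
    mul_ite, mul_one, mul_zero, ite_mul, zero_mul, Finset.sum_ite_eq, Finset.mem_univ, if_true]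
  rw [Finset.sum_comm]
  refine Finset.sum_congr rfl fun b _ => ?_
  simp_rw [Finset.mul_sum, Finset.sum_mul, mul_assoc]
  exact Finset.sum_comm

lemma kron_one_posDef {M B : ℕ} {G : Matrix (Fin M) (Fin M) ℝ} (hG : G.PosDef) :
    (G ⊗ₖ (1 : Matrix (Fin B) (Fin B) ℝ)).PosDef := by
  refine Matrix.posDef_iff_dotProduct_mulVec.mpr ⟨?_, ?_⟩
  · ext ⟨j, b⟩ ⟨k, c⟩
    simp only [conjTranspose_apply, kroneckerMap_apply, Matrix.one_apply, star_trivial]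
    rw [show G k j = G j k from (star_trivial _).symm.trans (hG.isHermitian.apply j k)]
    by_cases h : b = c
    · subst h; simp
    · simp [h, Ne.symm h]
  · intro x hx
    have key : star x ⬝ᵥ ((G ⊗ₖ (1 : Matrix (Fin B) (Fin B) ℝ)) *ᵥ x)
        = ∑ b : Fin B, (fun j => x (j, b)) ⬝ᵥ (G *ᵥ fun j => x (j, b)) := by
      simp only [dotProduct, Matrix.mulVec, Fintype.sum_prod_type, kroneckerMap_apply,
        Matrix.one_apply, star_trivial, mul_ite, mul_one, mul_zero, ite_mul, zero_mul,
        Finset.sum_ite_eq, Finset.mem_univ, if_true, Pi.star_apply, Finset.mul_sum]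
      rw [Finset.sum_comm]
    rw [key]
    obtain ⟨⟨j0, b0⟩, hp⟩ := Function.ne_iff.mp hx
    refine Finset.sum_pos' (fun b _ => ?_) ⟨b0, Finset.mem_univ _, ?_⟩
    · have := hG.posSemidef.dotProduct_mulVec_nonneg (fun j => x (j, b))
      simpa using this
    · have := hG.dotProduct_mulVec_pos (x := fun j => x (j, b0)) (by intro h; exact hp (congrFun h j0))
      simpa using this

lemma blockdiag_psd {M B : ℕ} (S : Fin M → Matrix (Fin B) (Fin B) ℝ)
    (hS : ∀ j, (S j).PosDef) :
    (Matrix.of fun p q : Fin M × Fin B => if p.1 = q.1 then S p.1 p.2 q.2 else 0).PosSemidef := by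
  refine Matrix.posSemidef_iff_dotProduct_mulVec.mpr ⟨?_, ?_⟩
  · ext ⟨j, b⟩ ⟨k, c⟩
    simp only [conjTranspose_apply, Matrix.of_apply, star_trivial]
    by_cases h : k = j
    · subst h
      simp [(star_trivial (S k c b)).symm.trans ((hS k).isHermitian.apply b c)]
    · simp [h, Ne.symm h]
  · intro x
    have key : star x ⬝ᵥ ((Matrix.of fun p q : Fin M × Fin B =>
        if p.1 = q.1 then S p.1 p.2 q.2 else 0) *ᵥ x)
        = ∑ j : Fin M, (fun b => x (j, b)) ⬝ᵥ (S j *ᵥ fun b => x (j, b)) := by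
      simp only [dotProduct, Matrix.mulVec, Fintype.sum_prod_type, Matrix.of_apply,
        star_trivial, mul_ite, mul_zero, ite_mul, zero_mul,
        Finset.mem_univ, if_true, Pi.star_apply, Finset.mul_sum]
      refine Finset.sum_congr rfl fun j _ => Finset.sum_congr rfl fun b _ => ?_
      rw [Finset.sum_comm]
      simp
    rw [key]
    exact Finset.sum_nonneg fun j _ => by simpa using (hS j).posSemidef.dotProduct_mulVec_nonneg (fun b => x (j, b))

/-- Bound via Lemma 1: with `Q = blockdiag(S_j) + AᵀA ⊗ I_B` (each `S_j` positive definite,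
`AᵀA` invertible) and `z = vec((Y − A R)ᵀ A)`,
`0 ≤ zᵀ Q⁻¹ z ≤ ‖Uᵀ(Y − A R)‖_F² ≤ ‖Y − A R‖_F²` where `A = U Λ Vᵀ` is the compact SVD. -/
theorem stmt17 {N M B : ℕ} (S : Fin M → Matrix (Fin B) (Fin B) ℝ)
    (hS : ∀ j, (S j).PosDef)
    (A U : Matrix (Fin N) (Fin M) ℝ) (d : Fin M → ℝ) (V : Matrix (Fin M) (Fin M) ℝ)
    (hU : Uᵀ * U = 1) (hd : ∀ i, d i ≠ 0) (hV : Vᵀ * V = 1 ∧ V * Vᵀ = 1)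
    (hSVD : A = U * Matrix.diagonal d * Vᵀ)
    (hAA : IsUnit (Aᵀ * A))
    (Y : Matrix (Fin N) (Fin B) ℝ) (R : Matrix (Fin M) (Fin B) ℝ) :
    let Q : Matrix (Fin M × Fin B) (Fin M × Fin B) ℝ :=
      (Matrix.of fun p q => if p.1 = q.1 then S p.1 p.2 q.2 else 0)
        + (Aᵀ * A) ⊗ₖ (1 : Matrix (Fin B) (Fin B) ℝ)
    let z : Fin M × Fin B → ℝ := fun p => ((Y - A * R)ᵀ * A) p.2 p.1
    0 ≤ z ⬝ᵥ (Q⁻¹ *ᵥ z) ∧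
    z ⬝ᵥ (Q⁻¹ *ᵥ z) ≤ ∑ i, ∑ b, ((Uᵀ * (Y - A * R)) i b) ^ 2 ∧
    (∑ i, ∑ b, ((Uᵀ * (Y - A * R)) i b) ^ 2) ≤ ∑ i, ∑ b, ((Y - A * R) i b) ^ 2 := by
  intro Q z
  obtain ⟨hV1, hV2⟩ := hV
  set E := Y - A * R with hE
  -- positive definiteness of AᵀA
  have hAmv : Function.Injective ((Aᵀ * A).mulVec) :=
    Matrix.mulVec_injective_iff_isUnit.mpr hAA
  have hAApos : (Aᵀ * A).PosDef := by
    refine Matrix.posDef_iff_dotProduct_mulVec.mpr ⟨?_, ?_⟩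
    · have h := (posSemidef_conjTranspose_mul_self A).1
      rwa [conjTranspose_eq_transpose_of_trivial] at h
    · intro x hx
      have h1 : A *ᵥ x ≠ 0 := by
        intro h0
        apply hx
        apply hAmv
        rw [← Matrix.mulVec_mulVec, h0]
        simp
      have h2 := dotProduct_star_self_pos_iff.mpr h1
      rw [star_trivial, ← Matrix.mulVec_mulVec, Matrix.dotProduct_mulVec,
        Matrix.vecMul_transpose]
      rwa [star_trivial] at h2
  set Dm : Matrix (Fin M × Fin B) (Fin M × Fin B) ℝ :=
    Matrix.of fun p q => if p.1 = q.1 then S p.1 p.2 q.2 else 0 with hDm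
  set K : Matrix (Fin M × Fin B) (Fin M × Fin B) ℝ :=
    (Aᵀ * A) ⊗ₖ (1 : Matrix (Fin B) (Fin B) ℝ) with hKdef
  have hDpsd : Dm.PosSemidef := blockdiag_psd S hS
  have hK : K.PosDef := kron_one_posDef hAApos
  have hQeq : Q = Dm + K := rfl
  have hQ : Q.PosDef := hQeq ▸ Matrix.PosDef.posSemidef_add hDpsd hK
  -- first inequality
  have h0 : 0 ≤ z ⬝ᵥ (Q⁻¹ *ᵥ z) := by
    have := hQ.inv.posSemidef.dotProduct_mulVec_nonneg z
    rwa [star_trivial] at this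
  -- symmetry of K
  have hsym : Kᵀ = K := by
    rw [← conjTranspose_eq_transpose_of_trivial]; exact hK.isHermitian
  set w : Fin M × Fin B → ℝ := Q⁻¹ *ᵥ z with hw
  have hQw : Q *ᵥ w = z := by
    rw [hw, Matrix.mulVec_mulVec,
      Matrix.mul_nonsing_inv _ ((Matrix.isUnit_iff_isUnit_det Q).mp hQ.isUnit), Matrix.one_mulVec]
  have hKw : K *ᵥ (K⁻¹ *ᵥ z) = z := by
    rw [Matrix.mulVec_mulVec,
      Matrix.mul_nonsing_inv _ ((Matrix.isUnit_iff_isUnit_det K).mp hK.isUnit), Matrix.one_mulVec]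
  -- the projection identity
  have hATA : Aᵀ * A = V * Matrix.diagonal (fun i => d i * d i) * Vᵀ := by
    rw [hSVD]
    simp only [Matrix.transpose_mul, Matrix.transpose_transpose, Matrix.diagonal_transpose,
      Matrix.mul_assoc]
    rw [← Matrix.mul_assoc Uᵀ U, hU, Matrix.one_mul,
      ← Matrix.mul_assoc (Matrix.diagonal _) (Matrix.diagonal _), Matrix.diagonal_mul_diagonal]
  have hGinv : (Aᵀ * A)⁻¹ = V * Matrix.diagonal (fun i => (d i)⁻¹ * (d i)⁻¹) * Vᵀ := by
    apply Matrix.inv_eq_right_inv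
    rw [hATA]
    simp only [Matrix.mul_assoc]
    rw [← Matrix.mul_assoc Vᵀ V, hV1, Matrix.one_mul,
      ← Matrix.mul_assoc (Matrix.diagonal _) (Matrix.diagonal _), Matrix.diagonal_mul_diagonal]
    have hone : (fun i => d i * d i * ((d i)⁻¹ * (d i)⁻¹)) = fun _ => (1 : ℝ) :=
      funext fun i => by have := hd i; field_simp
    rw [hone, Matrix.diagonal_one, Matrix.one_mul, hV2]
  have hproj : A * (Aᵀ * A)⁻¹ * Aᵀ = U * Uᵀ := by
    rw [hGinv, hSVD]
    simp only [Matrix.transpose_mul, Matrix.transpose_transpose, Matrix.diagonal_transpose,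
      Matrix.mul_assoc]
    rw [← Matrix.mul_assoc Vᵀ V, hV1, Matrix.one_mul,
      ← Matrix.mul_assoc Vᵀ V, hV1, Matrix.one_mul,
      ← Matrix.mul_assoc (Matrix.diagonal d), Matrix.diagonal_mul_diagonal,
      ← Matrix.mul_assoc (Matrix.diagonal _) (Matrix.diagonal d),
      Matrix.diagonal_mul_diagonal]
    have hone : (fun i => d i * ((d i)⁻¹ * (d i)⁻¹) * d i) = fun _ => (1 : ℝ) :=
      funext fun i => by have := hd i; field_simp
    rw [hone, Matrix.diagonal_one, Matrix.one_mul]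
  -- value of z ⬝ᵥ K⁻¹ z
  have hKinv : K⁻¹ = (Aᵀ * A)⁻¹ ⊗ₖ (1 : Matrix (Fin B) (Fin B) ℝ) := by
    rw [hKdef, Matrix.inv_kronecker, inv_one]
  have e3 : z ⬝ᵥ (K⁻¹ *ᵥ z) = Matrix.trace ((Eᵀ * A) * (Aᵀ * A)⁻¹ * (Eᵀ * A)ᵀ) := by
    rw [hKinv]
    exact dot_kron _ _
  have e4 : (Eᵀ * A) * (Aᵀ * A)⁻¹ * (Eᵀ * A)ᵀ = (Uᵀ * E)ᵀ * (Uᵀ * E) := by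
    have e4' : Eᵀ * ((A * (Aᵀ * A)⁻¹ * Aᵀ) * E) = Eᵀ * ((U * Uᵀ) * E) := by rw [hproj]
    simp only [Matrix.transpose_mul, Matrix.transpose_transpose, Matrix.mul_assoc] at e4' ⊢
    exact e4'
  have e5 : z ⬝ᵥ (K⁻¹ *ᵥ z) = ∑ i, ∑ b, ((Uᵀ * E) i b) ^ 2 := by
    rw [e3, e4, tr_eq_sum_sq]
  -- completion of squares: z ⬝ᵥ w ≤ z ⬝ᵥ K⁻¹ z
  have e1 : z ⬝ᵥ w = w ⬝ᵥ (Q *ᵥ w) := by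
    rw [hQw]; exact dotProduct_comm z w
  have e2 : w ⬝ᵥ (Q *ᵥ w) = w ⬝ᵥ (Dm *ᵥ w) + w ⬝ᵥ (K *ᵥ w) := by
    rw [hQeq, Matrix.add_mulVec, dotProduct_add]
  have hDw : 0 ≤ w ⬝ᵥ (Dm *ᵥ w) := by
    have := hDpsd.dotProduct_mulVec_nonneg w; rwa [star_trivial] at this
  have hvm : (K⁻¹ *ᵥ z) ᵥ* K = z := by
    nth_rewrite 2 [← hsym]
    rw [Matrix.vecMul_transpose, hKw]
  have h1 : (K⁻¹ *ᵥ z) ⬝ᵥ (K *ᵥ w) = z ⬝ᵥ w := by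
    rw [Matrix.dotProduct_mulVec, hvm]
  set u : Fin M × Fin B → ℝ := w - K⁻¹ *ᵥ z with hu
  have hupos : 0 ≤ u ⬝ᵥ (K *ᵥ u) := by
    have := hK.posSemidef.dotProduct_mulVec_nonneg u; rwa [star_trivial] at this
  have expand : u ⬝ᵥ (K *ᵥ u)
      = w ⬝ᵥ (K *ᵥ w) - w ⬝ᵥ z - z ⬝ᵥ w + z ⬝ᵥ (K⁻¹ *ᵥ z) := by
    rw [hu, Matrix.mulVec_sub, hKw, sub_dotProduct, dotProduct_sub,
      dotProduct_sub, h1, dotProduct_comm (K⁻¹ *ᵥ z) z]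
    ring
  have hwz : w ⬝ᵥ z = z ⬝ᵥ w := dotProduct_comm w z
  have hmid : z ⬝ᵥ w ≤ z ⬝ᵥ (K⁻¹ *ᵥ z) := by linarith
  -- third inequality
  have hF : (E - U * (Uᵀ * E))ᵀ * (E - U * (Uᵀ * E))
      = Eᵀ * E - (Uᵀ * E)ᵀ * (Uᵀ * E) := by
    simp only [Matrix.transpose_sub, Matrix.transpose_mul, Matrix.transpose_transpose,
      Matrix.sub_mul, Matrix.mul_sub, Matrix.mul_assoc]
    rw [← Matrix.mul_assoc Uᵀ U, hU, Matrix.one_mul]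
    abel
  have ht1 := tr_eq_sum_sq (E - U * (Uᵀ * E))
  rw [hF, Matrix.trace_sub, tr_eq_sum_sq, tr_eq_sum_sq] at ht1
  have htpos : (0:ℝ) ≤ ∑ i, ∑ j, ((E - U * (Uᵀ * E)) i j) ^ 2 :=
    Finset.sum_nonneg fun i _ => Finset.sum_nonneg fun j _ => sq_nonneg _
  refine ⟨h0, ?_, ?_⟩
  · rw [← e5]
    exact hmid
  · linarith [ht1 ▸ htpos]
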